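/- Let G = 𝔽₂ⁿ, let k ≥ 1, and for each h ∈ G let F_h : G → 𝕋 be a function such that: (a) F_{h+h′} − F_h − T^h F_{h′} ∈ Poly^{k−1}(G) for all h, h′ ∈ G; (b) ∂_{h₂} F_{h₁} − ∂_{h₁} F_{h₂} ∈ Poly^{k−2}(G) for all h₁, h₂ ∈ G; (c) 2(∂_{h₂} F_{h₁} − ∂_{h₁} F_{h₂}) ∈ Poly^{k−3}(G) for all h₁, h₂ ∈ G. Then there exists φ : G → 𝕋 such that F_h − ∂_h φ ∈ Poly^{k−1}(G) for every h ∈ G. -/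
import Mathlib


open scoped BigOperators Classical

abbrev Gn (n : ℕ) : Type := Fin n → ZMod 2
abbrev 𝕋 : Type := AddCircle (1 : ℝ)

/-- Discrete derivative `∂_h F = T^h F - F`. -/
def del {G H : Type*} [AddCommGroup G] [AddCommGroup H] (h : G) (F : G → H) : G → H :=
  fun x => F (x + h) - F x

/-- Iterated discrete derivative `∂_{h 0} ⋯ ∂_{h (m-1)} F`. -/
def delIter {G H : Type*} [AddCommGroup G] [AddCommGroup H] {m : ℕ}
    (h : Fin m → G) (F : G → H) : G → H :=
  (List.ofFn h).foldr del F

/-- `F` is a (non-classical) polynomial of degree at most `k` (`k : ℕ`). -/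
def IsPolyN {G H : Type*} [AddCommGroup G] [AddCommGroup H] (k : ℕ) (F : G → H) : Prop :=
  ∀ h : Fin (k + 1) → G, delIter h F = 0

/-- `F` is a polynomial of degree at most `k` for an integer `k`, where for `k < 0`
only the zero function qualifies. -/
def IsPolyZ {G H : Type*} [AddCommGroup G] [AddCommGroup H] (k : ℤ) (F : G → H) : Prop :=
  if 0 ≤ k then ∀ h : Fin (k.toNat + 1) → G, delIter h F = 0 else F = 0

namespace QCI

variable {G H : Type*} [AddCommGroup G] [AddCommGroup H]

/-- Translation operator. -/
def tr (a : G) (f : G → H) : G → H := fun x => f (x + a)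

lemma del_zero_fun (a : G) : del a (0 : G → H) = 0 := by
  funext x; simp [del]

lemma del_const (a : G) (c : H) : del a (fun _ => c) = 0 := by
  funext x; simp [del]

lemma del_add (a : G) (f g : G → H) : del a (f + g) = del a f + del a g := by
  funext x; simp [del]; abel

lemma del_neg (a : G) (f : G → H) : del a (-f) = -(del a f) := by
  funext x; simp [del]; abel

lemma del_sub (a : G) (f g : G → H) : del a (f - g) = del a f - del a g := by
  funext x; simp [del]; abel

lemma del_smul (a : G) (c : ℤ) (f : G → H) : del a (c • f) = c • del a f := by
  funext x; simp [del, smul_sub]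

lemma del_comm (a b : G) (f : G → H) : del a (del b f) = del b (del a f) := by
  funext x; simp only [del, add_right_comm]; abel

lemma del_tr (a b : G) (f : G → H) : del a (tr b f) = tr b (del a f) := by
  funext x; simp [del, tr, add_right_comm]

lemma del_add_dir (a b : G) (f : G → H) : del (a + b) f = del a f + tr a (del b f) := by
  funext x; simp only [del, tr, Pi.add_apply, ← add_assoc]; abel

section foldr

lemma foldr_del_zero (l : List G) : l.foldr del (0 : G → H) = 0 := by
  induction l with
  | nil => rfl
  | cons a l ih => simp only [List.foldr, ih, del_zero_fun]

lemma foldr_del_del (l : List G) (a : G) (f : G → H) :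
    l.foldr del (del a f) = del a (l.foldr del f) := by
  induction l with
  | nil => rfl
  | cons b l ih => simp only [List.foldr, ih, del_comm]

lemma foldr_del_add (l : List G) (f g : G → H) :
    l.foldr del (f + g) = l.foldr del f + l.foldr del g := by
  induction l with
  | nil => rfl
  | cons a l ih => simp only [List.foldr, ih, del_add]

lemma foldr_del_neg (l : List G) (f : G → H) :
    l.foldr del (-f) = -(l.foldr del f) := by
  induction l with
  | nil => rfl
  | cons a l ih => simp only [List.foldr, ih, del_neg]

lemma foldr_del_smul (l : List G) (c : ℤ) (f : G → H) :
    l.foldr del (c • f) = c • l.foldr del f := by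
  induction l with
  | nil => rfl
  | cons a l ih => simp only [List.foldr, ih, del_smul]

lemma foldr_del_tr (l : List G) (b : G) (f : G → H) :
    l.foldr del (tr b f) = tr b (l.foldr del f) := by
  induction l with
  | nil => rfl
  | cons a l ih => simp only [List.foldr, ih, del_tr]

variable {G' : Type*} [AddCommGroup G'] {π : G' → G}

lemma del_comp (hπ : ∀ a b, π (a + b) = π a + π b) (a : G') (f : G → H) :
    del a (f ∘ π) = (del (π a) f) ∘ π := by
  funext x; simp [del, Function.comp, hπ]

lemma foldr_del_comp (hπ : ∀ a b, π (a + b) = π a + π b) (l : List G') (f : G → H) :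
    l.foldr del (f ∘ π) = ((l.map π).foldr del f) ∘ π := by
  induction l with
  | nil => rfl
  | cons a l ih =>
      simp only [List.foldr, List.map, ih, del_comp hπ]

end foldr

section delIter

lemma delIter_nil (h : Fin 0 → G) (f : G → H) : delIter h f = f := by
  rw [delIter, List.ofFn_zero]; rfl

lemma delIter_succ {m : ℕ} (h : Fin (m + 1) → G) (f : G → H) :
    delIter h f = del (h 0) (delIter (Fin.tail h) f) := by
  rw [delIter, List.ofFn_succ]
  rfl

lemma delIter_one (a : G) (f : G → H) :
    delIter (fun _ : Fin 1 => a) f = del a f := by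
  rw [delIter_succ, delIter_nil]

lemma delIter_del {m : ℕ} (h : Fin m → G) (a : G) (f : G → H) :
    delIter h (del a f) = del a (delIter h f) :=
  foldr_del_del _ _ _

lemma delIter_comp {G' : Type*} [AddCommGroup G'] {π : G' → G}
    (hπ : ∀ a b, π (a + b) = π a + π b) {m : ℕ} (h : Fin m → G') (f : G → H) :
    delIter h (f ∘ π) = (delIter (π ∘ h) f) ∘ π := by
  rw [delIter, foldr_del_comp hπ, List.map_ofFn, delIter]

end delIter

section polyN

lemma isPolyN_zero (m : ℕ) : IsPolyN m (0 : G → H) := fun _ => foldr_del_zero _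

lemma isPolyN_add {m : ℕ} {f g : G → H} (hf : IsPolyN m f) (hg : IsPolyN m g) :
    IsPolyN m (f + g) := by
  intro h
  rw [delIter, foldr_del_add, ← delIter, ← delIter, hf h, hg h, add_zero]

lemma isPolyN_neg {m : ℕ} {f : G → H} (hf : IsPolyN m f) : IsPolyN m (-f) := by
  intro h
  rw [delIter, foldr_del_neg, ← delIter, hf h, neg_zero]

lemma isPolyN_smul {m : ℕ} (c : ℤ) {f : G → H} (hf : IsPolyN m f) : IsPolyN m (c • f) := by
  intro h
  rw [delIter, foldr_del_smul, ← delIter, hf h, smul_zero]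

lemma isPolyN_tr {m : ℕ} (b : G) {f : G → H} (hf : IsPolyN m f) : IsPolyN m (tr b f) := by
  intro h
  rw [delIter, foldr_del_tr, ← delIter, hf h]
  funext x; simp [tr]

lemma isPolyN_comp {G' : Type*} [AddCommGroup G'] {π : G' → G}
    (hπ : ∀ a b, π (a + b) = π a + π b) {m : ℕ} {f : G → H} (hf : IsPolyN m f) :
    IsPolyN m (f ∘ π) := by
  intro h
  rw [delIter_comp hπ, hf (π ∘ h)]
  rfl

lemma isPolyN_succ_iff {m : ℕ} (f : G → H) :
    IsPolyN (m + 1) f ↔ ∀ a : G, IsPolyN m (del a f) := by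
  constructor
  · intro hf a h
    rw [delIter_del]
    have := hf (Fin.cons a h)
    rwa [delIter_succ, Fin.cons_zero, Fin.tail_cons] at this
  · intro hf h
    rw [delIter_succ, ← delIter_del]
    exact hf (h 0) (Fin.tail h)

lemma isPolyN_mono_succ {m : ℕ} {f : G → H} (hf : IsPolyN m f) : IsPolyN (m + 1) f := by
  intro h
  rw [delIter_succ, hf (Fin.tail h), del_zero_fun]

lemma isPolyN_mono {m m' : ℕ} (hmm : m ≤ m') {f : G → H} (hf : IsPolyN m f) :
    IsPolyN m' f := by
  induction hmm with
  | refl => exact hf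
  | step _ ih => exact isPolyN_mono_succ (by exact ih)

lemma isPolyN_const (c : H) : IsPolyN 0 (fun _ : G => c) := by
  intro h
  rw [delIter_succ, delIter_nil, del_const]

lemma isPolyN_zero_apply {f : G → H} (hf : IsPolyN 0 f) (x : G) : f x = f 0 := by
  have := hf (fun _ => x)
  rw [delIter_one] at this
  have := congrFun this 0
  simp only [del, zero_add, Pi.zero_apply] at this
  exact sub_eq_zero.mp this

lemma isPolyN_zero_const {f : G → H} (hf : IsPolyN 0 f) : f = fun _ => f 0 :=
  funext fun x => isPolyN_zero_apply hf x

end polyN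

section polyZ

lemma isPolyZ_iff_of_neg {d : ℤ} (hd : d < 0) (f : G → H) :
    IsPolyZ d f ↔ f = 0 := by
  rw [IsPolyZ, if_neg (not_le.mpr hd)]

lemma isPolyZ_eq_nat {d : ℤ} {m : ℕ} (hd : d = m) (f : G → H) :
    IsPolyZ d f ↔ IsPolyN m f := by
  subst hd
  rw [IsPolyZ, if_pos (Int.natCast_nonneg m)]
  simp only [Int.toNat_natCast]
  exact Iff.rfl

lemma isPolyZ_zero (d : ℤ) : IsPolyZ d (0 : G → H) := by
  rcases lt_or_ge d 0 with hd | hd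
  · exact (isPolyZ_iff_of_neg hd _).mpr rfl
  · exact (isPolyZ_eq_nat (Int.toNat_of_nonneg hd).symm _).mpr (isPolyN_zero _)

lemma isPolyZ_congr {d : ℤ} {f g : G → H} (hfg : f = g) (hf : IsPolyZ d f) :
    IsPolyZ d g := hfg ▸ hf

lemma isPolyZ_add {d : ℤ} {f g : G → H} (hf : IsPolyZ d f) (hg : IsPolyZ d g) :
    IsPolyZ d (f + g) := by
  rcases lt_or_ge d 0 with hd | hd
  · rw [isPolyZ_iff_of_neg hd] at hf hg ⊢
    rw [hf, hg, add_zero]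
  · rw [isPolyZ_eq_nat (Int.toNat_of_nonneg hd).symm] at hf hg ⊢
    exact isPolyN_add hf hg

lemma isPolyZ_neg {d : ℤ} {f : G → H} (hf : IsPolyZ d f) : IsPolyZ d (-f) := by
  rcases lt_or_ge d 0 with hd | hd
  · rw [isPolyZ_iff_of_neg hd] at hf ⊢; rw [hf, neg_zero]
  · rw [isPolyZ_eq_nat (Int.toNat_of_nonneg hd).symm] at hf ⊢
    exact isPolyN_neg hf

lemma isPolyZ_sub {d : ℤ} {f g : G → H} (hf : IsPolyZ d f) (hg : IsPolyZ d g) :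
    IsPolyZ d (f - g) := by
  have := isPolyZ_add hf (isPolyZ_neg hg)
  rwa [sub_eq_add_neg]

lemma isPolyZ_smul {d : ℤ} (c : ℤ) {f : G → H} (hf : IsPolyZ d f) : IsPolyZ d (c • f) := by
  rcases lt_or_ge d 0 with hd | hd
  · rw [isPolyZ_iff_of_neg hd] at hf ⊢; rw [hf, smul_zero]
  · rw [isPolyZ_eq_nat (Int.toNat_of_nonneg hd).symm] at hf ⊢
    exact isPolyN_smul c hf

lemma isPolyZ_tr {d : ℤ} (b : G) {f : G → H} (hf : IsPolyZ d f) : IsPolyZ d (tr b f) := by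
  rcases lt_or_ge d 0 with hd | hd
  · rw [isPolyZ_iff_of_neg hd] at hf ⊢; rw [hf]; funext x; simp [tr]
  · rw [isPolyZ_eq_nat (Int.toNat_of_nonneg hd).symm] at hf ⊢
    exact isPolyN_tr b hf

lemma isPolyZ_comp {G' : Type*} [AddCommGroup G'] {π : G' → G}
    (hπ : ∀ a b, π (a + b) = π a + π b) {d : ℤ} {f : G → H} (hf : IsPolyZ d f) :
    IsPolyZ d (f ∘ π) := by
  rcases lt_or_ge d 0 with hd | hd
  · rw [isPolyZ_iff_of_neg hd] at hf ⊢; rw [hf]; rfl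
  · rw [isPolyZ_eq_nat (Int.toNat_of_nonneg hd).symm] at hf ⊢
    exact isPolyN_comp hπ hf

lemma isPolyZ_mono {d d' : ℤ} (hdd : d ≤ d') {f : G → H} (hf : IsPolyZ d f) :
    IsPolyZ d' f := by
  rcases lt_or_ge d 0 with hd | hd
  · rw [isPolyZ_iff_of_neg hd] at hf
    rw [hf]; exact isPolyZ_zero _
  · have hd' : 0 ≤ d' := le_trans hd hdd
    rw [isPolyZ_eq_nat (Int.toNat_of_nonneg hd).symm] at hf
    rw [isPolyZ_eq_nat (Int.toNat_of_nonneg hd').symm]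
    exact isPolyN_mono (by omega) hf

lemma isPolyZ_const {d : ℤ} (hd : 0 ≤ d) (c : H) : IsPolyZ d (fun _ : G => c) := by
  apply isPolyZ_mono hd
  exact (isPolyZ_eq_nat (by norm_num : (0:ℤ) = ((0:ℕ):ℤ)) _).mpr (isPolyN_const c)

lemma isPolyZ_zero_const {f : G → H} (hf : IsPolyZ 0 f) : f = fun _ => f 0 := by
  rw [isPolyZ_eq_nat (by norm_num : (0:ℤ) = ((0:ℕ):ℤ))] at hf
  exact isPolyN_zero_const hf

lemma isPolyZ_del {d : ℤ} (a : G) {f : G → H} (hf : IsPolyZ d f) :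
    IsPolyZ (d - 1) (del a f) := by
  rcases lt_or_ge d 0 with hd | hd
  · rw [isPolyZ_iff_of_neg hd] at hf
    rw [hf, del_zero_fun]; exact isPolyZ_zero _
  rcases eq_or_lt_of_le hd with hd0 | hd1
  · rw [isPolyZ_eq_nat (by omega : d = ((0:ℕ):ℤ))] at hf
    have : del a f = 0 := by
      have := hf (fun _ => a); rwa [delIter_one] at this
    rw [this]; exact isPolyZ_zero _
  · have h1 : (1:ℤ) ≤ d := hd1
    rw [isPolyZ_eq_nat (by omega : d = (((d-1).toNat + 1 : ℕ) : ℤ))] at hf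
    rw [isPolyZ_eq_nat (by omega : d - 1 = (((d-1).toNat : ℕ) : ℤ))]
    exact (isPolyN_succ_iff f).mp hf a

lemma isPolyZ_of_del {d : ℤ} (hd : 0 ≤ d) {f : G → H}
    (hf : ∀ a : G, IsPolyZ (d - 1) (del a f)) : IsPolyZ d f := by
  rcases eq_or_lt_of_le hd with hd0 | hd1
  · rw [isPolyZ_eq_nat (by omega : d = ((0:ℕ):ℤ))]
    intro h
    rw [delIter_succ, delIter_nil]
    have := hf (h 0)
    rw [isPolyZ_iff_of_neg (by omega)] at this
    exact this
  · rw [isPolyZ_eq_nat (by omega : d = (((d-1).toNat + 1 : ℕ) : ℤ))]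
    rw [isPolyN_succ_iff]
    intro a
    have := hf a
    rwa [isPolyZ_eq_nat (by omega : d - 1 = (((d-1).toNat : ℕ) : ℤ))] at this

lemma isPolyZ_sub_const {d : ℤ} (hd : -1 ≤ d) {f : G → H}
    (hf : ∀ a : G, IsPolyZ (d - 1) (del a f)) :
    IsPolyZ d (f - fun _ => f 0) := by
  rcases lt_or_ge d 0 with hneg | hpos
  · rw [isPolyZ_iff_of_neg hneg]
    funext x
    have := hf x
    rw [isPolyZ_iff_of_neg (by omega)] at this
    have h2 := congrFun this 0
    simp only [del, zero_add, Pi.zero_apply] at h2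
    simp [sub_eq_zero.mp h2]
  · apply isPolyZ_of_del hpos
    intro a
    rw [del_sub, del_const, sub_zero]
    exact hf a

end polyZ

section char2

lemma isPolyZ_two_smul (h2 : ∀ a : G, a + a = 0) {d : ℤ} (hd : 1 ≤ d) {f : G → H} (hf : IsPolyZ d f) :
    IsPolyZ (d - 1) ((2 : ℤ) • f) := by
  rw [isPolyZ_eq_nat (by omega : d = (((d-1).toNat + 1 : ℕ) : ℤ))] at hf
  rw [isPolyZ_eq_nat (by omega : d - 1 = (((d-1).toNat : ℕ) : ℤ))]
  intro h
  rw [delIter, foldr_del_smul, ← delIter]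
  rw [delIter_succ]
  set a := h 0 with ha
  set g := delIter (Fin.tail h) f with hg
  have key : (2 : ℤ) • del a g = -(del a (del a g)) := by
    funext x
    have hx : x + a + a = x := by rw [add_assoc, h2, add_zero]
    simp only [Pi.smul_apply, Pi.neg_apply, del, hx]
    abel
  rw [key]
  have : del a (del a g) = delIter (Fin.cons a (Fin.cons a (Fin.tail h))) f := by
    rw [delIter_succ, Fin.cons_zero, Fin.tail_cons, delIter_succ, Fin.cons_zero,
      Fin.tail_cons]
  rw [this, hf _, neg_zero]

end char2

end QCI

namespace F2

open QCI

lemma zmod2_cases : ∀ z : ZMod 2, z = 0 ∨ z = 1 := by decide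

lemma zmod2_add_self : ∀ z : ZMod 2, z + z = 0 := by decide

lemma gn_add_self {m : ℕ} (x : Gn m) : x + x = 0 := by
  funext i; exact zmod2_add_self (x i)

variable {n : ℕ}

def emb (n : ℕ) : Gn n → Gn (n + 1) := fun y => Fin.snoc y 0

def prj (n : ℕ) : Gn (n + 1) → Gn n := fun x i => x i.castSucc

def ee (n : ℕ) : Gn (n + 1) := Fin.snoc 0 1

lemma emb_add (a b : Gn n) : emb n (a + b) = emb n a + emb n b := by
  funext i
  refine Fin.lastCases ?_ ?_ i
  · simp [emb]
  · intro j; simp [emb]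

lemma prj_add (x y : Gn (n + 1)) : prj n (x + y) = prj n x + prj n y := rfl

lemma prj_emb (y : Gn n) : prj n (emb n y) = y := by
  funext i; simp [prj, emb]

lemma prj_ee : prj n (ee n) = 0 := by
  funext i; simp [prj, ee]

lemma ee_last : ee n (Fin.last n) = 1 := by simp [ee]

lemma emb_last (y : Gn n) : emb n y (Fin.last n) = 0 := by simp [emb]

lemma decomp0 {x : Gn (n + 1)} (hx : x (Fin.last n) = 0) : emb n (prj n x) = x := by
  funext i
  refine Fin.lastCases ?_ ?_ i
  · simp [emb, hx]
  · intro j; simp [emb, prj]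

lemma decomp1 {x : Gn (n + 1)} (hx : x (Fin.last n) = 1) : emb n (prj n x) + ee n = x := by
  funext i
  refine Fin.lastCases ?_ ?_ i
  · simp [emb, ee, hx]
  · intro j; simp [emb, ee, prj]

/-- Multiplication by the indicator of the affine hyperplane `x_last = 1`. -/
def chiMul {H : Type*} [AddCommGroup H] (Q : Gn (n + 1) → H) : Gn (n + 1) → H :=
  fun x => if x (Fin.last n) = 1 then Q x else 0

variable {H : Type*} [AddCommGroup H]

lemma chiMul_zero : chiMul (0 : Gn (n + 1) → H) = 0 := by
  funext x; simp [chiMul]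

/-- The key indicator-multiplication lemma. -/
lemma lemS : ∀ (m : ℕ) (Q : Gn (n + 1) → H),
    (∀ j : ℕ, IsPolyZ ((m : ℤ) - 1 - j) ((2 ^ j : ℤ) • Q)) →
    IsPolyZ (m : ℤ) (chiMul Q) := by
  intro m
  induction m with
  | zero =>
    intro Q hQ
    have h0 := hQ 0
    rw [isPolyZ_iff_of_neg (by norm_num)] at h0
    simp only [pow_zero, one_smul] at h0
    rw [h0, chiMul_zero]
    exact isPolyZ_zero _
  | succ m ih =>
    intro Q hQ
    have hQ0 : IsPolyZ (m : ℤ) Q := by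
      have h := hQ 0
      have hd0 : ((m + 1 : ℕ) : ℤ) - 1 - ((0:ℕ):ℤ) = (m : ℤ) := by push_cast; ring
      rw [hd0] at h
      simpa using h
    apply isPolyZ_of_del (by positivity)
    intro a
    have hdeg : ((m + 1 : ℕ) : ℤ) - 1 = (m : ℤ) := by push_cast; ring
    rcases zmod2_cases (a (Fin.last n)) with ha | ha
    · have hkey : del a (chiMul Q) = chiMul (del a Q) := by
        funext x
        have hx : (x + a) (Fin.last n) = x (Fin.last n) := by
          simp [Pi.add_apply, ha]
        simp only [del, chiMul, hx]
        by_cases hxl : x (Fin.last n) = 1 <;> simp [hxl]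
      rw [hkey, hdeg]
      apply ih
      intro j
      have h := isPolyZ_del a (hQ j)
      rw [del_smul] at h
      have hd1 : ((m + 1 : ℕ) : ℤ) - 1 - (j:ℤ) - 1 = (m : ℤ) - 1 - (j:ℤ) := by
        push_cast; ring
      rwa [hd1] at h
    · have hkey : del a (chiMul Q) = tr a Q - chiMul ((2 : ℤ) • Q + del a Q) := by
        funext x
        have hx : (x + a) (Fin.last n) = x (Fin.last n) + 1 := by
          simp [Pi.add_apply, ha]
        simp only [del, chiMul, tr, Pi.sub_apply, Pi.add_apply, Pi.smul_apply]
        rcases zmod2_cases (x (Fin.last n)) with hxl | hxl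
        · have hx1 : x (Fin.last n) + a (Fin.last n) = 1 := by
            rw [hxl, ha, zero_add]
          have h0 : x (Fin.last n) ≠ 1 := by rw [hxl]; decide
          rw [if_pos hx1, if_neg h0, if_neg h0]
        · have h1 : x (Fin.last n) + a (Fin.last n) ≠ 1 := by rw [hxl, ha]; decide
          rw [if_neg h1, if_pos hxl, if_pos hxl]
          abel
      rw [hkey, hdeg]
      apply isPolyZ_sub
      · exact isPolyZ_tr a hQ0
      · apply ih
        intro j
        have h1 : (2 ^ j : ℤ) • ((2 : ℤ) • Q + del a Q)
            = (2 ^ (j + 1) : ℤ) • Q + del a ((2 ^ j : ℤ) • Q) := by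
          have hp : (2 ^ (j + 1) : ℤ) = 2 ^ j * 2 := by ring
          rw [smul_add, del_smul, smul_smul, hp]
        rw [h1]
        apply isPolyZ_add
        · have h2 := hQ (j + 1)
          have hd2 : ((m + 1 : ℕ) : ℤ) - 1 - ((j + 1 : ℕ) : ℤ) = (m : ℤ) - 1 - (j:ℤ) := by
            push_cast; ring
          rwa [hd2] at h2
        · have h3 := isPolyZ_del a (hQ j)
          have hd3 : ((m + 1 : ℕ) : ℤ) - 1 - (j:ℤ) - 1 = (m : ℤ) - 1 - (j:ℤ) := by
            push_cast; ring
          rwa [hd3] at h3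

/-- Gluing lemma: polynomial on the hyperplane + derivative control implies polynomial. -/
lemma glue : ∀ (m : ℕ) (g : Gn (n + 1) → H),
    IsPolyZ (m : ℤ) (g ∘ emb n) → IsPolyZ ((m : ℤ) - 1) (del (ee n) g) →
    IsPolyZ (m : ℤ) g := by
  intro m
  induction m with
  | zero =>
    intro g hι he
    rw [isPolyZ_iff_of_neg (by norm_num)] at he
    have hval : ∀ x, g x = g (emb n 0) := by
      have hconst : ∀ y : Gn n, g (emb n y) = g (emb n 0) := by
        intro y
        have := isPolyZ_zero_const hι
        have h1 := congrFun this y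
        have h2 : (0 : Gn n) = 0 := rfl
        simpa [Function.comp] using h1
      intro x
      rcases zmod2_cases (x (Fin.last n)) with hx | hx
      · rw [← decomp0 hx]; exact hconst _
      · have hx1 : emb n (prj n x) + ee n = x := decomp1 hx
        have h3 := congrFun he (emb n (prj n x))
        simp only [del, Pi.zero_apply] at h3
        have h4 : g (emb n (prj n x) + ee n) = g (emb n (prj n x)) := by
          have := sub_eq_zero.mp h3; exact this
        rw [← hx1, h4]; exact hconst _
    apply isPolyZ_of_del le_rfl
    intro a
    rw [isPolyZ_iff_of_neg (by norm_num)]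
    funext x
    simp only [del, Pi.zero_apply, hval (x + a), hval x, sub_self]
  | succ m ih =>
    intro g hι he
    have hdeg : ((m + 1 : ℕ) : ℤ) - 1 = (m : ℤ) := by push_cast; ring
    rw [hdeg] at he
    have claim0 : ∀ h' : Gn n, IsPolyZ (m : ℤ) (del (emb n h') g) := by
      intro h'
      apply ih
      · have hcomp : (del (emb n h') g) ∘ emb n = del h' (g ∘ emb n) := by
          funext y
          simp only [Function.comp, del, ← emb_add]
        rw [hcomp]
        have := isPolyZ_del h' hι
        rwa [hdeg] at this
      · have hcomm : del (ee n) (del (emb n h') g) = del (emb n h') (del (ee n) g) :=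
          del_comm _ _ _
        rw [hcomm]
        exact isPolyZ_del _ he
    apply isPolyZ_of_del (by positivity)
    intro a
    rw [hdeg]
    rcases zmod2_cases (a (Fin.last n)) with ha | ha
    · rw [← decomp0 ha]
      exact claim0 _
    · have ha1 : emb n (prj n a) + ee n = a := decomp1 ha
      rw [← ha1, del_add_dir]
      exact isPolyZ_add (claim0 _) (isPolyZ_tr _ he)

end F2

namespace F2

open QCI

lemma isPolyZ_F0 {n k : ℕ} (hk : 1 ≤ k) (F : Gn n → Gn n → 𝕋)
    (ha : ∀ h h' : Gn n,
      IsPolyZ ((k : ℤ) - 1) (F (h + h') - F h - fun x => F h' (x + h))) :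
    IsPolyZ ((k : ℤ) - 1) (F 0) := by
  have h := ha 0 0
  have he : (F (0 + 0) - F 0 - fun x => F 0 (x + 0)) = -(F 0) := by
    funext x
    simp only [add_zero, zero_add, Pi.sub_apply, Pi.neg_apply]
    abel
  rw [he] at h
  have h2 := isPolyZ_neg h
  rwa [neg_neg] at h2

theorem main (n : ℕ) : ∀ (k : ℕ), 1 ≤ k → ∀ F : Gn n → Gn n → 𝕋,
    (∀ h h' : Gn n, IsPolyZ ((k : ℤ) - 1) (F (h + h') - F h - fun x => F h' (x + h))) →
    (∀ h₁ h₂ : Gn n, IsPolyZ ((k : ℤ) - 2) (del h₂ (F h₁) - del h₁ (F h₂))) →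
    (∀ h₁ h₂ : Gn n, IsPolyZ ((k : ℤ) - 3) ((2 : ℤ) • (del h₂ (F h₁) - del h₁ (F h₂)))) →
    ∃ φ : Gn n → 𝕋, ∀ h : Gn n, IsPolyZ ((k : ℤ) - 1) (F h - del h φ) := by
  induction n with
  | zero =>
    intro k hk F ha hb hc
    refine ⟨0, fun h => ?_⟩
    have h0 : h = (0 : Gn 0) := funext fun i => i.elim0
    have hsimp : F h - del h (0 : Gn 0 → 𝕋) = F 0 := by
      rw [h0, del_zero_fun, sub_zero]
    rw [hsimp]
    exact isPolyZ_F0 hk F ha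
  | succ n ih =>
    intro k hk F ha hb hc
    set e : Gn (n + 1) := ee n with he_def
    have hk1 : (0 : ℤ) ≤ (k : ℤ) - 1 := by omega
    have hee : e + e = 0 := gn_add_self e
    have hxee : ∀ x : Gn (n + 1), x + e + e = x := fun x => by
      rw [add_assoc, hee, add_zero]
    have helast : e (Fin.last n) = 1 := ee_last
    -- the symmetrized function Q
    set Q : Gn (n + 1) → 𝕋 := F e + tr e (F e) with hQ_def
    have hQ : IsPolyZ ((k : ℤ) - 1) Q := by
      have hg := ha e e
      rw [show e + e = 0 from hee] at hg
      have hexp : Q = F 0 - (F 0 - F e - fun x => F e (x + e)) := by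
        funext x
        simp only [hQ_def, tr, Pi.add_apply, Pi.sub_apply]
        abel
      rw [hexp]
      exact isPolyZ_sub (isPolyZ_F0 hk F ha) hg
    have hQe : tr e Q = Q := by
      funext x
      simp only [hQ_def, tr, Pi.add_apply]
      rw [hxee x]
      abel
    have hdelQ : ∀ a : Gn (n + 1), IsPolyZ ((k : ℤ) - 3) (del a Q) := by
      intro a
      have hκ := hb e a
      have hκ2 := hc e a
      have key : del a Q = (2 : ℤ) • (del a (F e) - del e (F a))
          + del e (del a (F e) - del e (F a)) := by
        funext x
        simp only [hQ_def, del, tr, Pi.add_apply, Pi.sub_apply, Pi.smul_apply]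
        rw [hxee x, add_right_comm x e a]
        abel
      rw [key]
      apply isPolyZ_add hκ2
      have h1 := isPolyZ_del e hκ
      rwa [show (k : ℤ) - 2 - 1 = (k : ℤ) - 3 from by ring] at h1
    -- the centered function Q₀
    set Q₀ : Gn (n + 1) → 𝕋 := Q - fun _ => Q 0 with hQ₀_def
    have hQ₀ : IsPolyZ ((k : ℤ) - 2) Q₀ := by
      rw [hQ₀_def]
      apply isPolyZ_sub_const (by omega : (-1 : ℤ) ≤ (k : ℤ) - 2)
      intro a
      have h1 := hdelQ a
      rwa [show (k : ℤ) - 2 - 1 = (k : ℤ) - 3 from by ring]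
    have hQ₀0 : Q₀ 0 = 0 := by simp [hQ₀_def]
    have hQ₀e : tr e Q₀ = Q₀ := by
      funext x
      have h1 : Q (x + e) = Q x := congrFun hQe x
      simp only [hQ₀_def, tr, Pi.sub_apply, h1]
    -- the 2-divisibility chain
    have hstar : ∀ j : ℕ, IsPolyZ ((k : ℤ) - 2 - j) ((2 ^ j : ℤ) • Q₀) := by
      intro j
      induction j with
      | zero => simpa using hQ₀
      | succ j ihj =>
        have hph : ((2 : ℤ) ^ (j + 1)) • Q₀ = (2 : ℤ) • ((2 ^ j : ℤ) • Q₀) := by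
          rw [← mul_smul]
          congr 1
          ring
        rcases lt_or_ge ((k : ℤ) - 2 - j) 1 with hlt | hge
        · have hz : ((2 ^ j : ℤ)) • Q₀ = 0 := by
            rcases lt_or_ge ((k : ℤ) - 2 - j) 0 with h0 | h0
            · exact (isPolyZ_iff_of_neg h0 _).mp ihj
            · have hdj : (k : ℤ) - 2 - j = 0 := by omega
              rw [hdj] at ihj
              have hcc := isPolyZ_zero_const ihj
              funext x
              have hx := congrFun hcc x
              simp only [Pi.zero_apply]
              rw [hx]
              simp [hQ₀0]
          rw [hph, hz, smul_zero]
          exact isPolyZ_zero _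
        · have h1 := isPolyZ_two_smul gn_add_self hge ihj
          rw [hph]
          rwa [show (k : ℤ) - 2 - (j : ℤ) - 1 = (k : ℤ) - 2 - ((j : ℕ) + 1 : ℕ) from by
            push_cast; ring] at h1
    -- halving the constant
    obtain ⟨β, hβ⟩ : ∃ β : 𝕋, β + β = Q 0 := by
      obtain ⟨r, hr⟩ := QuotientAddGroup.mk_surjective (Q 0)
      refine ⟨QuotientAddGroup.mk (r / 2), ?_⟩
      rw [← QuotientAddGroup.mk_add, ← hr]
      congr 1
      ring
    -- the polynomial R with R + T^e R = Q
    set R : Gn (n + 1) → 𝕋 := (fun _ => β) + chiMul Q₀ with hR_def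
    have hR : IsPolyZ ((k : ℤ) - 1) R := by
      rw [hR_def]
      apply isPolyZ_add (isPolyZ_const hk1 β)
      have hls := lemS (k - 1) Q₀ ?_
      · rwa [show (((k - 1 : ℕ)) : ℤ) = (k : ℤ) - 1 from by omega] at hls
      · intro j
        have h1 := hstar j
        rwa [show (k : ℤ) - 2 - (j : ℤ) = ((k - 1 : ℕ) : ℤ) - 1 - (j : ℤ) from by omega] at h1
    have hchiN : ∀ x, chiMul Q₀ x + chiMul Q₀ (x + e) = Q₀ x := by
      intro x
      have hxe : (x + e) (Fin.last n) = x (Fin.last n) + 1 := by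
        simp [Pi.add_apply, helast]
      rcases zmod2_cases (x (Fin.last n)) with hx0 | hx0
      · have h1 : (x + e) (Fin.last n) = 1 := by rw [hxe, hx0, zero_add]
        have hQe' : Q₀ (x + e) = Q₀ x := by
          have h2 := congrFun hQ₀e x
          simpa [tr] using h2
        simp only [chiMul, if_neg (show x (Fin.last n) ≠ 1 from by rw [hx0]; decide),
          if_pos h1, hQe', zero_add]
      · have h1 : (x + e) (Fin.last n) ≠ 1 := by rw [hxe, hx0]; decide
        simp only [chiMul, if_pos hx0, if_neg h1, add_zero]
    have hNR : ∀ x, R x + R (x + e) = Q x := by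
      intro x
      have h1 := hchiN x
      have h2 : Q₀ x = Q x - Q 0 := by simp [hQ₀_def]
      rw [h2] at h1
      simp only [hR_def, Pi.add_apply]
      have h3 : β + chiMul Q₀ x + (β + chiMul Q₀ (x + e))
          = (β + β) + (chiMul Q₀ x + chiMul Q₀ (x + e)) := by abel
      rw [h3, hβ, h1]
      abel
    -- the antisymmetric part S and its primitive ψ
    set S : Gn (n + 1) → 𝕋 := F e - R with hS_def
    have hStre : ∀ x, S (x + e) = - S x := by
      intro x
      have h1 : S x + S (x + e) = 0 := by
        have hq : Q x = F e x + F e (x + e) := by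
          simp [hQ_def, tr]
        have h2 := hNR x
        simp only [hS_def, Pi.sub_apply]
        rw [sub_add_sub_comm, h2, ← hq, sub_self]
      rw [add_comm] at h1
      exact add_eq_zero_iff_eq_neg.mp h1
    set ψ : Gn (n + 1) → 𝕋 := fun x => if x (Fin.last n) = 1 then S (x + e) else 0
      with hψ_def
    have hψ : del e ψ = S := by
      funext x
      have hxe : (x + e) (Fin.last n) = x (Fin.last n) + 1 := by
        simp [Pi.add_apply, helast]
      simp only [del, hψ_def]
      rcases zmod2_cases (x (Fin.last n)) with hx0 | hx0
      · have h1 : (x + e) (Fin.last n) = 1 := by rw [hxe, hx0, zero_add]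
        rw [if_pos h1, if_neg (show x (Fin.last n) ≠ 1 from by rw [hx0]; decide),
          hxee x, sub_zero]
      · have h1 : (x + e) (Fin.last n) ≠ 1 := by rw [hxe, hx0]; decide
        rw [if_neg h1, if_pos hx0, zero_sub, hStre x, neg_neg]
    -- the corrected family F'
    set F' : Gn (n + 1) → Gn (n + 1) → 𝕋 := fun h => F h - del h ψ with hF'_def
    have hF'e : IsPolyZ ((k : ℤ) - 1) (F' e) := by
      have hfr : F' e = R := by
        simp only [hF'_def]
        rw [hψ, hS_def]
        funext x
        simp only [Pi.sub_apply]
        abel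
      rw [hfr]
      exact hR
    have ha' : ∀ h h' : Gn (n + 1),
        IsPolyZ ((k : ℤ) - 1) (F' (h + h') - F' h - fun x => F' h' (x + h)) := by
      intro h h'
      have hid : (F' (h + h') - F' h - fun x => F' h' (x + h))
          = (F (h + h') - F h - fun x => F h' (x + h)) := by
        funext x
        simp only [hF'_def, del, Pi.sub_apply]
        rw [show x + (h + h') = x + h + h' from by rw [add_assoc]]
        abel
      rw [hid]
      exact ha h h'
    have hbeq : ∀ h₁ h₂ : Gn (n + 1),
        (del h₂ (F' h₁) - del h₁ (F' h₂)) = (del h₂ (F h₁) - del h₁ (F h₂)) := by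
      intro h₁ h₂
      funext x
      simp only [hF'_def, del, Pi.sub_apply]
      rw [show x + h₁ + h₂ = x + h₂ + h₁ from by rw [add_right_comm]]
      abel
    have hb' : ∀ h₁ h₂ : Gn (n + 1),
        IsPolyZ ((k : ℤ) - 2) (del h₂ (F' h₁) - del h₁ (F' h₂)) := by
      intro h₁ h₂
      rw [hbeq]
      exact hb h₁ h₂
    -- the restricted family f on the hyperplane
    set f : Gn n → Gn n → 𝕋 := fun h' y => F' (emb n h') (emb n y) with hf_def
    have ha_f : ∀ h h' : Gn n,
        IsPolyZ ((k : ℤ) - 1) (f (h + h') - f h - fun y => f h' (y + h)) := by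
      intro h h'
      have hcomp : (f (h + h') - f h - fun y => f h' (y + h))
          = (F' (emb n h + emb n h') - F' (emb n h)
              - fun x => F' (emb n h') (x + emb n h)) ∘ emb n := by
        funext y
        simp only [hf_def, Function.comp, Pi.sub_apply, emb_add]
      rw [hcomp]
      exact isPolyZ_comp emb_add (ha' (emb n h) (emb n h'))
    have hdel_f : ∀ (h₁ h₂ : Gn n),
        (del h₂ (f h₁) - del h₁ (f h₂))
          = (del (emb n h₂) (F' (emb n h₁)) - del (emb n h₁) (F' (emb n h₂))) ∘ emb n := by
      intro h₁ h₂
      funext y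
      simp only [hf_def, del, Function.comp, Pi.sub_apply, emb_add]
    have hb_f : ∀ h₁ h₂ : Gn n,
        IsPolyZ ((k : ℤ) - 2) (del h₂ (f h₁) - del h₁ (f h₂)) := by
      intro h₁ h₂
      rw [hdel_f]
      exact isPolyZ_comp emb_add (hb' _ _)
    have hc_f : ∀ h₁ h₂ : Gn n,
        IsPolyZ ((k : ℤ) - 3) ((2 : ℤ) • (del h₂ (f h₁) - del h₁ (f h₂))) := by
      intro h₁ h₂
      rw [hdel_f]
      have hcs : ((2 : ℤ) • ((del (emb n h₂) (F' (emb n h₁))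
            - del (emb n h₁) (F' (emb n h₂))) ∘ emb n))
          = ((2 : ℤ) • (del (emb n h₂) (F' (emb n h₁))
            - del (emb n h₁) (F' (emb n h₂)))) ∘ emb n := rfl
      rw [hcs]
      apply isPolyZ_comp emb_add
      rw [hbeq]
      exact hc _ _
    obtain ⟨φ₀, hφ₀⟩ := ih k hk f ha_f hb_f hc_f
    set Ψ : Gn (n + 1) → 𝕋 := fun x => φ₀ (prj n x) with hΨ_def
    have hΨe : del e Ψ = 0 := by
      funext x
      simp only [del, hΨ_def, Pi.zero_apply]
      rw [show prj n (x + e) = prj n x from by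
        rw [he_def, prj_add, prj_ee, add_zero], sub_self]
    have claimA : ∀ h' : Gn n,
        IsPolyZ ((k : ℤ) - 1) (F' (emb n h') - del (emb n h') Ψ) := by
      intro h'
      have hkm : ((k : ℤ) - 1) = ((k - 1 : ℕ) : ℤ) := by omega
      rw [hkm]
      apply glue
      · have hco : (F' (emb n h') - del (emb n h') Ψ) ∘ emb n = f h' - del h' φ₀ := by
          funext y
          simp only [Function.comp, Pi.sub_apply, del, hΨ_def, hf_def, ← emb_add, prj_emb]
        rw [hco, ← hkm]
        exact hφ₀ h'
      · have hsimp2 : del (ee n) (F' (emb n h') - del (emb n h') Ψ)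
            = del e (F' (emb n h')) := by
          rw [← he_def, del_sub, del_comm, hΨe, del_zero_fun, sub_zero]
        have hP : IsPolyZ ((k : ℤ) - 2) (del e (F' (emb n h'))) := by
          rw [show del e (F' (emb n h'))
              = (del e (F' (emb n h')) - del (emb n h') (F' e))
                + del (emb n h') (F' e) from by rw [sub_add_cancel]]
          apply isPolyZ_add (hb' _ _)
          have h1 := isPolyZ_del (emb n h') hF'e
          rwa [show (k : ℤ) - 1 - 1 = (k : ℤ) - 2 from by ring] at h1
        rw [hsimp2, show ((k - 1 : ℕ) : ℤ) - 1 = (k : ℤ) - 2 from by omega]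
        exact hP
    -- conclusion
    refine ⟨fun x => ψ x + Ψ x, ?_⟩
    intro h
    have hsplit : F h - del h (fun x => ψ x + Ψ x) = (F' h - del h Ψ) := by
      funext x
      simp only [hF'_def, del, Pi.sub_apply]
      abel
    rw [hsplit]
    rcases zmod2_cases (h (Fin.last n)) with hh | hh
    · rw [← decomp0 hh]
      exact claimA _
    · have hd1 : emb n (prj n h) + e = h := by rw [he_def]; exact decomp1 hh
      rw [← hd1]
      set a := emb n (prj n h) with ha_def
      have key2 : F' (a + e) - del (a + e) Ψ
          = ((F' (a + e) - F' a - fun x => F' e (x + a)) + tr a (F' e))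
            + (F' a - del a Ψ) := by
        funext x
        have hpr : prj n (x + (a + e)) = prj n (x + a) := by
          simp only [he_def, prj_add, prj_ee, add_zero]
        simp only [Pi.add_apply, Pi.sub_apply, tr, del, hΨ_def]
        rw [hpr]
        abel
      rw [key2]
      exact isPolyZ_add (isPolyZ_add (ha' a e) (isPolyZ_tr a hF'e)) (claimA _)

end F2

/-- integration of a quasi-cocycle.  Given a family `F_h : 𝔽₂ⁿ → 𝕋`
satisfying the quasi-cocycle, quasi-curlfree and doubled quasi-curlfree conditions,
there is `φ : 𝔽₂ⁿ → 𝕋` with `F_h - ∂_h φ ∈ Poly^{k-1}` for all `h`. -/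
theorem quasi_cocycle_integration
    (n k : ℕ) (hk : 1 ≤ k) (F : Gn n → Gn n → 𝕋)
    (ha : ∀ h h' : Gn n,
      IsPolyZ ((k : ℤ) - 1) (F (h + h') - F h - fun x => F h' (x + h)))
    (hb : ∀ h₁ h₂ : Gn n,
      IsPolyZ ((k : ℤ) - 2) (del h₂ (F h₁) - del h₁ (F h₂)))
    (hc : ∀ h₁ h₂ : Gn n,
      IsPolyZ ((k : ℤ) - 3) ((2 : ℤ) • (del h₂ (F h₁) - del h₁ (F h₂)))) :
    ∃ φ : Gn n → 𝕋, ∀ h : Gn n, IsPolyZ ((k : ℤ) - 1) (F h - del h φ) :=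
  F2.main n k hk F ha hb hc
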